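/- arXiv:1402.6381 — 2 statements merged into one kernel-verified Lean document; each statement's English description precedes it below -/
import Mathlib

section
/- The matrix M₋ = [[−(1−ε)²/A₀, 2ε(1−ε)], [−(1−ε)²/A₀², 0]] with A₀ < −1, 0 < ε < 1 has determinant 2ε(1−ε)³/A₀² > 0, trace −(1−ε)²/A₀ > 0, and discriminant (trace)² − 4det = (1−ε)³(1−9ε)/A₀². Hence for 0 < ε < 1/9 both eigenvalues are real and positive (unstable node), while for 1/9 < ε < 1 the eigenvalues are complex conjugates with positive real part (unstable spiral). -/
set_option maxHeartbeats 1000000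


/-- the linearization matrix at the tangential point `t = 0, θ = -π/2`
has determinant `2ε(1-ε)³/A₀² > 0`, trace `-(1-ε)²/A₀ > 0`, discriminant
`(1-ε)³(1-9ε)/A₀²`; for `0 < ε < 1/9` both eigenvalues are real and positive
(unstable node), for `1/9 < ε < 1` they are complex with positive real part
(unstable spiral). -/
theorem stmt11 (A₀ ε : ℝ) (hA₀ : A₀ < -1) (hε : 0 < ε) (hε1 : ε < 1) :
    let M : Matrix (Fin 2) (Fin 2) ℝ :=
      !![-(1 - ε) ^ 2 / A₀, 2 * ε * (1 - ε); -(1 - ε) ^ 2 / A₀ ^ 2, 0]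
    M.det = 2 * ε * (1 - ε) ^ 3 / A₀ ^ 2 ∧ 0 < M.det ∧
    M.trace = -(1 - ε) ^ 2 / A₀ ∧ 0 < M.trace ∧
    M.trace ^ 2 - 4 * M.det = (1 - ε) ^ 3 * (1 - 9 * ε) / A₀ ^ 2 ∧
    (ε < 1 / 9 → ∃ lam₁ lam₂ : ℝ, 0 < lam₁ ∧ 0 < lam₂ ∧ lam₁ ≠ lam₂ ∧
      (M - lam₁ • (1 : Matrix (Fin 2) (Fin 2) ℝ)).det = 0 ∧
      (M - lam₂ • (1 : Matrix (Fin 2) (Fin 2) ℝ)).det = 0) ∧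
    (1 / 9 < ε → (∀ lam : ℝ, (M - lam • (1 : Matrix (Fin 2) (Fin 2) ℝ)).det ≠ 0) ∧
      ∃ z : ℂ, z.im ≠ 0 ∧ 0 < z.re ∧
        ((M.map (Complex.ofReal · )) - z • (1 : Matrix (Fin 2) (Fin 2) ℂ)).det = 0) := by
  intro M
  have hA0 : A₀ ≠ 0 := by nlinarith
  have hA2 : (0:ℝ) < A₀ ^ 2 := by positivity
  have h1ε : (0:ℝ) < 1 - ε := by linarith
  set t : ℝ := -(1 - ε) ^ 2 / A₀ with ht
  set d : ℝ := 2 * ε * (1 - ε) ^ 3 / A₀ ^ 2 with hd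
  have htpos : 0 < t := by
    rw [ht, div_pos_iff]; right
    constructor
    · nlinarith
    · linarith
  have hdpos : 0 < d := by rw [hd]; positivity
  have hdet : M.det = d := by
    show (!![-(1-ε)^2/A₀, 2*ε*(1-ε); -(1-ε)^2/A₀^2, 0] : Matrix (Fin 2) (Fin 2) ℝ).det = d
    rw [Matrix.det_fin_two_of, hd]
    field_simp
    ring
  have htr : M.trace = t := by
    show (!![-(1-ε)^2/A₀, 2*ε*(1-ε); -(1-ε)^2/A₀^2, 0] : Matrix (Fin 2) (Fin 2) ℝ).trace = t
    rw [Matrix.trace_fin_two_of]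
    simp [ht]
  have hdisc : t ^ 2 - 4 * d = (1 - ε) ^ 3 * (1 - 9 * ε) / A₀ ^ 2 := by
    rw [ht, hd]
    field_simp
    ring
  have hchar : ∀ lam : ℝ,
      (M - lam • (1 : Matrix (Fin 2) (Fin 2) ℝ)).det = lam ^ 2 - t * lam + d := by
    intro lam
    have hM : M - lam • (1 : Matrix (Fin 2) (Fin 2) ℝ) =
        !![-(1-ε)^2/A₀ - lam, 2*ε*(1-ε); -(1-ε)^2/A₀^2, -lam] := by
      ext i j
      fin_cases i <;> fin_cases j <;>
        simp [M, Matrix.one_apply, Matrix.sub_apply, Matrix.smul_apply]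
    rw [hM, Matrix.det_fin_two_of, ht, hd]
    field_simp
    ring
  refine ⟨hdet, hdet ▸ hdpos, htr, htr ▸ htpos, ?_, ?_, ?_⟩
  · rw [hdet, htr]; exact hdisc
  · intro hε9
    have hΔpos : 0 < t ^ 2 - 4 * d := by
      rw [hdisc]
      apply div_pos
      · have := mul_pos (pow_pos h1ε 3) (show (0:ℝ) < 1 - 9 * ε by linarith)
        linarith
      · exact hA2
    set s : ℝ := Real.sqrt (t ^ 2 - 4 * d) with hs
    have hspos : 0 < s := Real.sqrt_pos.2 hΔpos
    have hssq : s ^ 2 = t ^ 2 - 4 * d := Real.sq_sqrt hΔpos.le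
    have hst : s < t := by
      nlinarith
    refine ⟨(t + s) / 2, (t - s) / 2, by linarith, by linarith, by intro h; nlinarith,
      ?_, ?_⟩ <;> [skip; skip] <;>
      · rw [hchar]; nlinarith
  · intro hε9
    have hΔneg : t ^ 2 - 4 * d < 0 := by
      rw [hdisc]
      apply div_neg_of_neg_of_pos
      · have := mul_pos (pow_pos h1ε 3) (show (0:ℝ) < 9 * ε - 1 by linarith)
        nlinarith
      · exact hA2
    constructor
    · intro lam
      rw [hchar]
      nlinarith [sq_nonneg (lam - t / 2)]
    · set s : ℝ := Real.sqrt (4 * d - t ^ 2) with hs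
      have hspos : 0 < s := Real.sqrt_pos.2 (by linarith)
      have hssq : s ^ 2 = 4 * d - t ^ 2 := Real.sq_sqrt (by linarith)
      set z : ℂ := (↑(t/2) : ℂ) + (↑(s/2) : ℂ) * Complex.I with hz
      have hzim : z.im = s / 2 := by simp [hz]
      have hzre : z.re = t / 2 := by simp [hz]
      refine ⟨z, by rw [hzim]; positivity, by rw [hzre]; positivity, ?_⟩
      have hM : (M.map (Complex.ofReal · )) - z • (1 : Matrix (Fin 2) (Fin 2) ℂ) =
          !![Complex.ofReal (-(1-ε)^2/A₀) - z, Complex.ofReal (2*ε*(1-ε));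
             Complex.ofReal (-(1-ε)^2/A₀^2), -z] := by
        ext i j
        fin_cases i <;> fin_cases j <;>
          simp [M, Matrix.one_apply, Matrix.sub_apply, Matrix.smul_apply, Matrix.map_apply] <;>
          (push_cast; ring)
      rw [hM, Matrix.det_fin_two_of]
      have htC : Complex.ofReal (-(1-ε)^2/A₀) = ((t : ℝ) : ℂ) := by rw [ht]
      have hbc : Complex.ofReal (2*ε*(1-ε)) * Complex.ofReal (-(1-ε)^2/A₀^2) = -(d : ℂ) := by
        rw [hd]
        push_cast
        have hAC : (A₀ : ℂ) ≠ 0 := by exact_mod_cast hA0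
        field_simp
      rw [htC]
      have expand : (((t:ℝ):ℂ) - z) * (-z) -
          Complex.ofReal (2*ε*(1-ε)) * Complex.ofReal (-(1-ε)^2/A₀^2) =
          -((t:ℂ)^2)/4 - ((s:ℂ)^2)/4 + (d:ℂ) := by
        rw [hbc, hz]
        push_cast
        ring_nf
        rw [Complex.I_sq]
        ring
      rw [expand]
      have hsC : ((s:ℂ))^2 = 4*(d:ℂ) - (t:ℂ)^2 := by exact_mod_cast hssq
      rw [hsC]
      ring
end

section
/- Suppose ρ: (θ₀−δ, θ₀+δ) → [0,∞) is such that on each of countably many disjoint open intervals (α_k, β_k) it equals a C¹ function ρ_k ≥ 0 vanishing at the endpoints, with bounds sup_{(α_k,β_k)} ρ_k ≤ C sup_{[α_k,β_k]} |h(θ)| and |ρ_k'(θ)| ≤ C(|h(θ)| + √(ρ_k(θ))), where h is continuous and h(θ') = 0, and ρ = 0 off the union of the intervals. Then ρ is differentiable at θ' with ρ(θ') = 0 and ρ'(θ') = 0, and ρ' is continuous at θ'. -/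
/-!
Let `θ` be a tangential point (outside every arc) and `s` lie in an arc `ρ_k`. Between `θ` and
`s` sits an endpoint of that arc, where `ρ_k` vanishes; on the stretch from it to `s`, of length
`L ≤ |s - θ|`, let `|h| ≤ ε` and let `M` be the maximum of `ρ_k`. The mean value theorem gives
`M ≤ C (ε + √M) L`, hence `ρ_k(s) ≤ M ≤ (2Cε + C²L) L`. As `h(θ') = 0`, this makes
`ρ(s) = o(|s - θ|)` uniformly for tangential `θ` and all `s` near `θ'`. Taking `θ = θ'` gives
`ρ'(θ') = 0`; near `θ'` the derivative is small at tangential points by the same bound, and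
inside an arc by `|ρ_k'| ≤ C (|h| + √ρ_k)`.
-/

open Set Filter Topology Metric

theorem le_two_mul_add_sq_of_le_add_mul_sqrt {M A B : ℝ} (hM : 0 ≤ M)
    (h : M ≤ A + B * √M) : M ≤ 2 * A + B ^ 2 := by
  nlinarith [Real.sq_sqrt hM, sq_nonneg (√M - B)]

theorem Convex.abs_sub_le_of_abs_deriv_le {D : Set ℝ} (hD : Convex ℝ D) {f : ℝ → ℝ} {K : ℝ}
    (hf : ContinuousOn f D) (hf' : DifferentiableOn ℝ f (interior D))
    (hK : ∀ x ∈ interior D, |deriv f x| ≤ K) {x y : ℝ} (hx : x ∈ D) (hy : y ∈ D) :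
    |f y - f x| ≤ K * |y - x| := by
  wlog hxy : x ≤ y generalizing x y
  · rw [abs_sub_comm, abs_sub_comm y]
    exact this hy hx (le_of_not_ge hxy)
  rw [abs_of_nonneg (sub_nonneg.2 hxy), abs_le, ← neg_mul]
  exact ⟨hD.mul_sub_le_image_sub_of_le_deriv hf hf' (fun z hz => (abs_le.1 (hK z hz)).1)
      x hx y hy hxy,
    hD.image_sub_le_mul_sub_of_deriv_le hf hf' (fun z hz => (abs_le.1 (hK z hz)).2)
      x hx y hy hxy⟩

theorem le_of_eq_zero_of_abs_deriv_le_add_sqrt {f : ℝ → ℝ} {a b C ε e y : ℝ} (hab : a ≤ b)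
    (hf : ContinuousOn f (Icc a b)) (hd : ∀ x ∈ Ioo a b, DifferentiableAt ℝ f x)
    (hnn : ∀ x ∈ Icc a b, 0 ≤ f x) (hder : ∀ x ∈ Ioo a b, |deriv f x| ≤ C * (ε + √(f x)))
    (hC : 0 ≤ C) (hε : 0 ≤ ε) (he : e ∈ Icc a b) (hfe : f e = 0) (hy : y ∈ Icc a b) :
    f y ≤ (2 * C * ε + C ^ 2 * (b - a)) * (b - a) := by
  obtain ⟨m, hm, hmax⟩ := isCompact_Icc.exists_isMaxOn (nonempty_Icc.2 hab) hf
  have hK : ∀ x ∈ interior (Icc a b), |deriv f x| ≤ C * (ε + √(f m)) := by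
    rw [interior_Icc]
    exact fun x hx => (hder x hx).trans (by gcongr; exact hmax (Ioo_subset_Icc_self hx))
  have hmvt := (convex_Icc a b).abs_sub_le_of_abs_deriv_le hf
    (interior_Icc (a := a) ▸ fun x hx => (hd x hx).differentiableWithinAt) hK he hm
  have hme : |m - e| ≤ b - a :=
    abs_sub_le_iff.2 ⟨by linarith [hm.2, he.1], by linarith [hm.1, he.2]⟩
  have hfm : f m ≤ C * ε * (b - a) + C * (b - a) * √(f m) := by
    rw [hfe, sub_zero] at hmvt
    calc f m ≤ C * (ε + √(f m)) * |m - e| := (le_abs_self _).trans hmvt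
      _ ≤ C * (ε + √(f m)) * (b - a) := by gcongr
      _ = C * ε * (b - a) + C * (b - a) * √(f m) := by ring
  calc f y ≤ f m := hmax hy
    _ ≤ 2 * (C * ε * (b - a)) + (C * (b - a)) ^ 2 :=
      le_two_mul_add_sq_of_le_add_mul_sqrt (hnn m hm) hfm
    _ = (2 * C * ε + C ^ 2 * (b - a)) * (b - a) := by ring

theorem le_of_notMem_Ioo_of_abs_deriv_le_add_sqrt {f g : ℝ → ℝ} {a b C ε θ s : ℝ}
    (hf : ContinuousOn f (Icc a b)) (hends : f a = 0 ∧ f b = 0) (hnn : ∀ x ∈ Icc a b, 0 ≤ f x)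
    (hd : ∀ x ∈ Ioo a b, DifferentiableAt ℝ f x)
    (hder : ∀ x ∈ Ioo a b, |deriv f x| ≤ C * (|g x| + √(f x))) (hC : 0 ≤ C)
    (hg : ∀ x ∈ uIcc θ s, |g x| ≤ ε) (hθ : θ ∉ Ioo a b) (hs : s ∈ Ioo a b) :
    f s ≤ (2 * C * ε + C ^ 2 * |s - θ|) * |s - θ| := by
  have hε : 0 ≤ ε := (abs_nonneg _).trans (hg θ left_mem_uIcc)
  have hder' : ∀ x ∈ Ioo a b, x ∈ uIcc θ s → |deriv f x| ≤ C * (ε + √(f x)) := fun x hx hxθ =>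
    (hder x hx).trans (by gcongr; exact hg x hxθ)
  rcases le_or_gt θ a with hθa | haθ
  · have hL : s - a ≤ |s - θ| := by rw [abs_of_nonneg (by linarith [hs.1])]; linarith
    have hsub : Icc a s ⊆ Icc a b := Icc_subset_Icc_right hs.2.le
    refine (le_of_eq_zero_of_abs_deriv_le_add_sqrt hs.1.le (hf.mono hsub)
      (fun x hx => hd x ⟨hx.1, hx.2.trans hs.2⟩) (fun x hx => hnn x (hsub hx))
      (fun x hx => hder' x ⟨hx.1, hx.2.trans hs.2⟩ (Icc_subset_uIcc ⟨by linarith [hx.1], hx.2.le⟩))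
      hC hε (left_mem_Icc.2 hs.1.le) hends.1 (right_mem_Icc.2 hs.1.le)).trans ?_
    gcongr; linarith [hs.1]
  · have hbθ : b ≤ θ := le_of_not_gt fun hθb => hθ ⟨haθ, hθb⟩
    have hL : b - s ≤ |s - θ| := by rw [abs_of_nonpos (by linarith [hs.2])]; linarith
    have hsub : Icc s b ⊆ Icc a b := Icc_subset_Icc_left hs.1.le
    refine (le_of_eq_zero_of_abs_deriv_le_add_sqrt hs.2.le (hf.mono hsub)
      (fun x hx => hd x ⟨hs.1.trans hx.1, hx.2⟩) (fun x hx => hnn x (hsub hx))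
      (fun x hx => hder' x ⟨hs.1.trans hx.1, hx.2⟩ (Icc_subset_uIcc' ⟨hx.1.le, by linarith [hx.2]⟩))
      hC hε (right_mem_Icc.2 hs.2.le) hends.2 (left_mem_Icc.2 hs.2.le)).trans ?_
    gcongr; linarith [hs.2]

theorem abs_le_of_notMem_iUnion {ρ g : ℝ → ℝ} {ρk : ℕ → ℝ → ℝ} {α β : ℕ → ℝ} {C ε θ s : ℝ}
    {I : Set ℝ}
    (hglue : ∀ k, ∀ θ ∈ Ioo (α k) (β k), ρ θ = ρk k θ)
    (hnonneg : ∀ k, ∀ θ ∈ Icc (α k) (β k), 0 ≤ ρk k θ)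
    (hcont : ∀ k, ContinuousOn (ρk k) (Icc (α k) (β k)))
    (hends : ∀ k, ρk k (α k) = 0 ∧ ρk k (β k) = 0)
    (hd : ∀ k, ∀ θ ∈ Ioo (α k) (β k), DifferentiableAt ℝ (ρk k) θ)
    (hder : ∀ k, ∀ θ ∈ Ioo (α k) (β k), |deriv (ρk k) θ| ≤ C * (|g θ| + √(ρk k θ)))
    (hzero : ∀ θ ∈ I, θ ∉ ⋃ k, Ioo (α k) (β k) → ρ θ = 0) (hC : 0 ≤ C)
    (hg : ∀ x ∈ uIcc θ s, |g x| ≤ ε) (hθ : θ ∉ ⋃ k, Ioo (α k) (β k)) (hs : s ∈ I) :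
    |ρ s| ≤ (2 * C * ε + C ^ 2 * |s - θ|) * |s - θ| := by
  by_cases hsU : s ∈ ⋃ k, Ioo (α k) (β k)
  · obtain ⟨k, hk⟩ := mem_iUnion.1 hsU
    rw [hglue k s hk, abs_of_nonneg (hnonneg k s (Ioo_subset_Icc_self hk))]
    exact le_of_notMem_Ioo_of_abs_deriv_le_add_sqrt (hcont k) (hends k) (hnonneg k) (hd k)
      (hder k) hC hg (fun hθk => hθ (mem_iUnion_of_mem k hθk)) hk
  · have hε : 0 ≤ ε := (abs_nonneg _).trans (hg θ left_mem_uIcc)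
    rw [hzero s hs hsU, abs_zero]
    positivity

section Flat

variable {ρ : ℝ → ℝ} {U : Set ℝ} {θ' : ℝ}

theorem exists_ball_abs_le_mul_abs_sub {g : ℝ → ℝ} {I : Set ℝ} {C : ℝ} (hC : 0 < C)
    (hI : I ∈ 𝓝 θ') (hg : ContinuousAt g θ') (hgθ' : g θ' = 0)
    (hest : ∀ θ s ε, θ ∉ U → s ∈ I → (∀ x ∈ uIcc θ s, |g x| ≤ ε) →
      |ρ s| ≤ (2 * C * ε + C ^ 2 * |s - θ|) * |s - θ|) :
    ∀ ε > 0, ∃ η > 0, ∀ θ ∈ ball θ' η \ U, ∀ s ∈ ball θ' η, |ρ s| ≤ ε * |s - θ| := by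
  intro ε hε
  have hgsmall : ∀ᶠ x in 𝓝 θ', |g x| < ε / (4 * C) := by
    have hlim := hg.tendsto.abs
    rw [hgθ', abs_zero] at hlim
    exact hlim.eventually_lt_const (by positivity)
  have hnear : ∀ᶠ x in 𝓝 θ', dist x θ' < ε / (4 * C ^ 2) := ball_mem_nhds θ' (by positivity)
  obtain ⟨η, hη, hball⟩ := Metric.eventually_nhds_iff_ball.1 (hgsmall.and (hnear.and hI))
  refine ⟨η, hη, fun θ hθ s hs => ?_⟩
  have hseg : uIcc θ s ⊆ ball θ' η := (convex_ball θ' η).ordConnected.uIcc_subset hθ.1 hs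
  have hθs : |s - θ| ≤ 2 * (ε / (4 * C ^ 2)) := by
    have htri := dist_triangle_right s θ θ'
    rw [Real.dist_eq] at htri
    linarith [(hball s hs).2.1, (hball θ hθ.1).2.1]
  calc |ρ s| ≤ (2 * C * (ε / (4 * C)) + C ^ 2 * |s - θ|) * |s - θ| :=
        hest θ s _ hθ.2 (hball s hs).2.2 fun x hx => (hball x (hseg hx)).1.le
    _ ≤ (2 * C * (ε / (4 * C)) + C ^ 2 * (2 * (ε / (4 * C ^ 2)))) * |s - θ| := by gcongr
    _ = ε * |s - θ| := by field_simp; ring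

theorem hasDerivAt_zero_of_abs_le_mul_abs_sub
    (hflat : ∀ ε > 0, ∃ η > 0, ∀ θ ∈ ball θ' η \ U, ∀ s ∈ ball θ' η, |ρ s| ≤ ε * |s - θ|)
    (hθ' : θ' ∉ U) : HasDerivAt ρ 0 θ' := by
  rw [hasDerivAt_iff_isLittleO, Asymptotics.isLittleO_iff]
  intro c hc
  obtain ⟨η, hη, hρ⟩ := hflat c hc
  have hρθ' : ρ θ' = 0 := by simpa using hρ θ' ⟨mem_ball_self hη, hθ'⟩ θ' (mem_ball_self hη)
  filter_upwards [ball_mem_nhds θ' hη] with s hs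
  simpa [hρθ'] using hρ θ' ⟨mem_ball_self hη, hθ'⟩ s hs

theorem abs_deriv_le_of_abs_le_mul_abs_sub {η ε u : ℝ} (hε : 0 ≤ ε)
    (hρ : ∀ θ ∈ ball θ' η \ U, ∀ s ∈ ball θ' η, |ρ s| ≤ ε * |s - θ|) (hu : u ∈ ball θ' η \ U) :
    |deriv ρ u| ≤ ε := by
  have hρu : ρ u = 0 := by simpa using hρ u hu u hu.1
  have hlip : ∀ᶠ s in 𝓝 u, ‖ρ s - ρ u‖ ≤ ε * ‖s - u‖ := by
    filter_upwards [isOpen_ball.mem_nhds hu.1] with s hs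
    simpa [hρu] using hρ u hu s hs
  simpa using norm_deriv_le_of_lip' hε hlip

theorem tendsto_deriv_zero_of_abs_le_mul_abs_sub {g : ℝ → ℝ} {C : ℝ} (hC : 0 ≤ C)
    (hg : ContinuousAt g θ') (hgθ' : g θ' = 0)
    (hflat : ∀ ε > 0, ∃ η > 0, ∀ θ ∈ ball θ' η \ U, ∀ s ∈ ball θ' η, |ρ s| ≤ ε * |s - θ|)
    (hθ' : θ' ∉ U) (hderU : ∀ u ∈ U, |deriv ρ u| ≤ C * (|g u| + √(ρ u))) :
    Tendsto (deriv ρ) (𝓝 θ') (𝓝 0) := by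
  refine Metric.tendsto_nhds.2 fun ε hε => ?_
  obtain ⟨η, hη, hρ⟩ := hflat (ε / 2) (half_pos hε)
  have hbound : Tendsto (fun u => ε / 2 + C * (|g u| + √(ε / 2 * |u - θ'|))) (𝓝 θ')
      (𝓝 (ε / 2)) := by
    have hcont : ContinuousAt (fun u => ε / 2 + C * (|g u| + √(ε / 2 * |u - θ'|))) θ' := by
      fun_prop
    simpa [hgθ'] using hcont.tendsto
  filter_upwards [hbound.eventually_lt_const (half_lt_self hε), ball_mem_nhds θ' hη]
    with u hu hball
  rw [dist_zero_right, Real.norm_eq_abs]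
  refine lt_of_le_of_lt ?_ hu
  by_cases huU : u ∈ U
  · calc |deriv ρ u| ≤ C * (|g u| + √(ρ u)) := hderU u huU
      _ ≤ C * (|g u| + √(ε / 2 * |u - θ'|)) := by
        gcongr
        exact (le_abs_self (ρ u)).trans (hρ θ' ⟨mem_ball_self hη, hθ'⟩ u hball)
      _ ≤ _ := by linarith
  · linarith [abs_deriv_le_of_abs_le_mul_abs_sub (half_pos hε).le hρ ⟨hball, huU⟩,
      mul_nonneg hC (add_nonneg (abs_nonneg (g u)) (Real.sqrt_nonneg (ε / 2 * |u - θ'|)))]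

end Flat

theorem stmt12_general (θ' δ C : ℝ) (hδ : 0 < δ) (hC : 0 < C)
    (ρ : ℝ → ℝ) (h : ℝ → ℝ) (hh : Continuous h) (hhθ' : h θ' = 0)
    (α β : ℕ → ℝ) (ρk : ℕ → ℝ → ℝ)
    (hglue : ∀ k, ∀ θ ∈ Ioo (α k) (β k), ρ θ = ρk k θ)
    (hnonneg : ∀ k, ∀ θ ∈ Icc (α k) (β k), 0 ≤ ρk k θ)
    (hcont : ∀ k, ContinuousOn (ρk k) (Icc (α k) (β k)))
    (hends : ∀ k, ρk k (α k) = 0 ∧ ρk k (β k) = 0)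
    (hC1 : ∀ k, ∀ θ ∈ Ioo (α k) (β k), HasDerivAt (ρk k) (deriv (ρk k) θ) θ)
    (hder : ∀ k, ∀ θ ∈ Ioo (α k) (β k),
      |deriv (ρk k) θ| ≤ C * (|h θ| + Real.sqrt (ρk k θ)))
    (hzero : ∀ θ ∈ Ioo (θ' - δ) (θ' + δ),
      θ ∉ (⋃ k, Ioo (α k) (β k)) → ρ θ = 0)
    (hnotin : ∀ k, θ' ∉ Ioo (α k) (β k)) :
    ρ θ' = 0 ∧ HasDerivAt ρ 0 θ' ∧
      Filter.Tendsto (deriv ρ) (nhds θ') (nhds 0) := by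
  set U := ⋃ k, Ioo (α k) (β k)
  have hθ'U : θ' ∉ U := by simpa [U] using hnotin
  have hθ'I : θ' ∈ Ioo (θ' - δ) (θ' + δ) := ⟨by linarith, by linarith⟩
  have hflat := exists_ball_abs_le_mul_abs_sub hC (Ioo_mem_nhds hθ'I.1 hθ'I.2)
    hh.continuousAt hhθ' fun θ s ε hθ hs hε => abs_le_of_notMem_iUnion hglue hnonneg hcont
      hends (fun k θ hθ => (hC1 k θ hθ).differentiableAt) hder hzero hC.le hε hθ hs
  have hderU : ∀ u ∈ U, |deriv ρ u| ≤ C * (|h u| + √(ρ u)) := by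
    intro u hu
    obtain ⟨k, hk⟩ := mem_iUnion.1 hu
    have hloc : ρ =ᶠ[𝓝 u] ρk k := eventually_of_mem (isOpen_Ioo.mem_nhds hk) (hglue k)
    rw [hloc.deriv_eq, hglue k u hk]
    exact hder k u hk
  exact ⟨hzero θ' hθ'I hθ'U, hasDerivAt_zero_of_abs_le_mul_abs_sub hflat hθ'U,
    tendsto_deriv_zero_of_abs_le_mul_abs_sub hC.le hh.continuousAt hhθ' hflat hθ'U hderU⟩

/-- the event horizon graph `ρ = ρ(θ)` glued from countably many
`C¹` characteristic arcs `ρ_k ≥ 0` over disjoint intervals `(α_k, β_k)`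
(vanishing at the endpoints, with `ρ_k ≤ C·sup|h|` on the interval and
`|ρ_k'| ≤ C(|h| + √ρ_k)`), and `ρ = 0` off the union, is differentiable at a point
`θ'` with `h(θ') = 0`, with `ρ(θ') = 0`, `ρ'(θ') = 0`, and `deriv ρ` continuous
at `θ'`. -/
theorem stmt12 (θ' δ C : ℝ) (hδ : 0 < δ) (hC : 0 < C)
    (ρ : ℝ → ℝ) (h : ℝ → ℝ) (hh : Continuous h) (hhθ' : h θ' = 0)
    (α β : ℕ → ℝ) (ρk : ℕ → ℝ → ℝ)
    (hαβ : ∀ k, α k < β k)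
    (hsub : ∀ k, Ioo (α k) (β k) ⊆ Ioo (θ' - δ) (θ' + δ))
    (hdisj : ∀ k l, k ≠ l → Disjoint (Ioo (α k) (β k)) (Ioo (α l) (β l)))
    (hglue : ∀ k, ∀ θ ∈ Ioo (α k) (β k), ρ θ = ρk k θ)
    (hnonneg : ∀ k, ∀ θ ∈ Icc (α k) (β k), 0 ≤ ρk k θ)
    (hcont : ∀ k, ContinuousOn (ρk k) (Icc (α k) (β k)))
    (hends : ∀ k, ρk k (α k) = 0 ∧ ρk k (β k) = 0)
    (hC1 : ∀ k, ∀ θ ∈ Ioo (α k) (β k), HasDerivAt (ρk k) (deriv (ρk k) θ) θ)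
    (hsup : ∀ k, ∀ θ ∈ Ioo (α k) (β k), ∃ s ∈ Icc (α k) (β k), ρk k θ ≤ C * |h s|)
    (hder : ∀ k, ∀ θ ∈ Ioo (α k) (β k),
      |deriv (ρk k) θ| ≤ C * (|h θ| + Real.sqrt (ρk k θ)))
    (hzero : ∀ θ ∈ Ioo (θ' - δ) (θ' + δ),
      θ ∉ (⋃ k, Ioo (α k) (β k)) → ρ θ = 0)
    (hnotin : ∀ k, θ' ∉ Ioo (α k) (β k)) :
    ρ θ' = 0 ∧ HasDerivAt ρ 0 θ' ∧
      Filter.Tendsto (deriv ρ) (nhds θ') (nhds 0) :=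
  stmt12_general θ' δ C hδ hC ρ h hh hhθ' α β ρk hglue hnonneg hcont hends hC1 hder hzero hnotin
end
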